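/- arXiv:1901.01436 — 2 statements merged into one kernel-verified Lean document; each statement's English description precedes it below -/
import Mathlib

section
/- Suppose j, n, m ≥ 3, (n+m-4) ≡ 0 mod (j-1), and j, n, and s = (n+m-4)/(j-1) are all odd. Then in any red/blue edge coloring of the complete multipartite graph K_{j×s}, if no vertex has red degree at least n-1, then some vertex has blue degree at least m-1. Consequently K_{j×s} → (S_n, S_m). -/
/-- The complete balanced multipartite graph `K_{j×s}` on `Fin j × Fin s`:
vertices are adjacent iff they lie in different parts (different first coordinate). -/
def multiK (j s : ℕ) : SimpleGraph (Fin j × Fin s) where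
  Adj u v := u.1 ≠ v.1
  symm := ⟨fun _ _ h => h.symm⟩
  loopless := ⟨fun _ h => h rfl⟩

/-- Degree of a vertex, via `Set.ncard` of its neighbor set. -/
noncomputable def mdeg {V : Type*} (G : SimpleGraph V) (v : V) : ℕ :=
  (G.neighborSet v).ncard

/-- `K_{j×s} → (S_n, S_m)`: every red/blue edge coloring (red subgraph `R ≤ K_{j×s}`,
blue the rest) contains a red `K_{1,n-1}` or a blue `K_{1,m-1}`. -/
def Arrows (j s n m : ℕ) : Prop :=
  ∀ R : SimpleGraph (Fin j × Fin s), R ≤ multiK j s →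
    (∃ v, n - 1 ≤ mdeg R v) ∨ (∃ v, m - 1 ≤ mdeg (multiK j s \ R) v)

/-- The size Ramsey multipartite number `m_j(S_n, S_m)`. -/
noncomputable def mj (j n m : ℕ) : ℕ := sInf {s | Arrows j s n m}

/-!
Every vertex of `K_{j×s}` has degree `(j-1)s = n+m-4`. If no vertex has red degree `n-1` or more,
the red degrees are at most `n-2`; they cannot all equal `n-2`, since the degree sum `js(n-2)`
would then be odd. A vertex of red degree at most `n-3` has blue degree at least `m-1`.
-/

namespace SimpleGraph

variable {V : Type*}

theorem mdeg_eq_degree [Fintype V] (G : SimpleGraph V) [DecidableRel G.Adj] (v : V) :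
    mdeg G v = G.degree v := by
  rw [mdeg, ← card_neighborSet_eq_degree, Set.ncard_eq_toFinset_card', Set.toFinset_card]

theorem mdeg_sdiff_of_le [Finite V] {G R : SimpleGraph V} (h : R ≤ G) (v : V) :
    mdeg (G \ R) v = mdeg G v - mdeg R v := by
  rw [mdeg, mdeg, mdeg, neighborSet_sdiff, Set.ncard_sdiff (neighborSet_mono h v)]

theorem IsRegularOfDegree.even_card_mul [Fintype V] {G : SimpleGraph V} [DecidableRel G.Adj]
    {d : ℕ} (h : G.IsRegularOfDegree d) : Even (Fintype.card V * d) := by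
  classical
  rw [← smul_eq_mul, ← Finset.card_univ, ← Finset.sum_const, ← Finset.sum_congr rfl fun v _ => h v,
    sum_degrees_eq_twice_card_edges]
  exact even_two_mul _

theorem exists_mdeg_lt_of_forall_mdeg_le [Fintype V] (G : SimpleGraph V) {d : ℕ}
    (hodd : Odd (Fintype.card V * d)) (hle : ∀ v, mdeg G v ≤ d) : ∃ v, mdeg G v < d := by
  classical
  by_contra! hge
  have hreg : G.IsRegularOfDegree d := fun v => by
    rw [← mdeg_eq_degree]
    exact (hle v).antisymm (hge v)
  exact Nat.not_even_iff_odd.mpr hodd hreg.even_card_mul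

end SimpleGraph

theorem multiK_eq_completeEquipartiteGraph (j s : ℕ) :
    multiK j s = SimpleGraph.completeEquipartiteGraph j s := by
  ext
  rfl

theorem mdeg_multiK (j s : ℕ) (v : Fin j × Fin s) : mdeg (multiK j s) v = (j - 1) * s := by
  rw [multiK_eq_completeEquipartiteGraph, SimpleGraph.mdeg_eq_degree,
    SimpleGraph.degree_completeEquipartiteGraph]

theorem stmt5_general (j n m s : ℕ) (hn : 3 ≤ n)
    (hdvd : (j - 1) ∣ (n + m - 4)) (hs : s = (n + m - 4) / (j - 1))
    (hjo : Odd j) (hno : Odd n) (hso : Odd s) :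
    (∀ R : SimpleGraph (Fin j × Fin s), R ≤ multiK j s →
      (∀ v, mdeg R v < n - 1) → ∃ v, m - 1 ≤ mdeg (multiK j s \ R) v) ∧
      Arrows j s n m := by
  have hdeg : (j - 1) * s = n + m - 4 := hs ▸ Nat.mul_div_cancel' hdvd
  have hodd : Odd (Fintype.card (Fin j × Fin s) * (n - 2)) := by
    rw [Fintype.card_prod, Fintype.card_fin, Fintype.card_fin]
    exact (hjo.mul hso).mul (Nat.Odd.sub_even (by omega) hno even_two)
  have blue : ∀ R : SimpleGraph (Fin j × Fin s), R ≤ multiK j s →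
      (∀ v, mdeg R v < n - 1) → ∃ v, m - 1 ≤ mdeg (multiK j s \ R) v := by
    intro R hR hred
    obtain ⟨v, hv⟩ := R.exists_mdeg_lt_of_forall_mdeg_le hodd fun v => by
      have := hred v
      omega
    refine ⟨v, ?_⟩
    rw [SimpleGraph.mdeg_sdiff_of_le hR, mdeg_multiK, hdeg]
    omega
  exact ⟨blue, fun R hR => or_iff_not_imp_left.mpr fun hred =>
    blue R hR fun v => not_le.mp (not_exists.mp hred v)⟩

theorem stmt5 (j n m s : ℕ) (hj : 3 ≤ j) (hn : 3 ≤ n) (hm : 3 ≤ m)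
    (hdvd : (j - 1) ∣ (n + m - 4)) (hs : s = (n + m - 4) / (j - 1))
    (hjo : Odd j) (hno : Odd n) (hso : Odd s) :
    (∀ R : SimpleGraph (Fin j × Fin s), R ≤ multiK j s →
      (∀ v, mdeg R v < n - 1) → ∃ v, m - 1 ≤ mdeg (multiK j s \ R) v) ∧
      Arrows j s n m :=
  stmt5_general j n m s hn hdvd hs hjo hno hso
end

section
/- Let j ≥ 3 and s ≥ 1 with j even. Then for every integer d with 0 ≤ d ≤ (j-1)s - 1 there exists a d-regular spanning subgraph of the complete multipartite graph K_{j×s}. -/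
/-!
Take the Cayley graph of `ℤ_j × ℤ_s` whose connection set `S` avoids the subgroup `0 × ℤ_s`:
it is a spanning subgraph of `K_{j×s}`, and it is `|S|`-regular when `S = -S`. Such sets `S`
of every size up to `(j - 1) s` exist because, `j` being even, `(j / 2, 0)` is an element of
order two outside `0 × ℤ_s`: the remaining elements come in pairs `{x, -x}`, and the single
element of order two fixes the parity.
-/

open Finset SimpleGraph

theorem Finset.exists_neg_closed_subset_card_eq {G : Type*} [InvolutiveNeg G] [DecidableEq G]
    {A : Finset G} (hA : ∀ x ∈ A, -x ∈ A) {e : G} (he : e ∈ A) (hee : -e = e) {d : ℕ}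
    (hd : d ≤ #A) : ∃ S ⊆ A, (∀ x ∈ S, -x ∈ S) ∧ #S = d := by
  induction A using Finset.strongInduction with
  | H A ih =>
  obtain hdA | hdA | hdA : d = #A ∨ d + 1 = #A ∨ d + 2 ≤ #A := by omega
  · exact ⟨A, subset_rfl, hA, hdA.symm⟩
  · refine ⟨A.erase e, erase_subset e A, fun x hx => ?_, by rw [card_erase_of_mem he]; omega⟩
    rw [mem_erase] at hx ⊢
    exact ⟨fun h => hx.1 (by rw [← neg_neg x, h, hee]), hA x hx.2⟩
  · obtain ⟨x, hxA, hxe⟩ := exists_mem_ne (s := A) (by omega) e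
    have hpair : {x, -x} ⊆ A := by simp [insert_subset_iff, hxA, hA x hxA]
    have hB : A \ {x, -x} ⊂ A := sdiff_ssubset hpair (insert_nonempty _ _)
    have hBneg : ∀ y ∈ A \ {x, -x}, -y ∈ A \ {x, -x} := fun y hy => by
      simp only [mem_sdiff, mem_insert, mem_singleton, neg_neg, neg_eq_iff_eq_neg] at hy ⊢
      exact ⟨hA y hy.1, by tauto⟩
    have heB : e ∈ A \ {x, -x} := by
      simp only [mem_sdiff, mem_insert, mem_singleton, not_or]
      exact ⟨he, Ne.symm hxe, fun h => hxe (by rw [← neg_neg x, ← h, hee])⟩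
    have hdB : d ≤ #(A \ {x, -x}) :=
      (le_card_sdiff _ _).trans' (by have := card_le_two (a := x) (b := -x); omega)
    obtain ⟨S, hSB, hS⟩ := ih _ hB hBneg heB hdB
    exact ⟨S, hSB.trans hB.subset, hS⟩

section AddCayley

variable {G : Type*} [AddGroup G] {s : Set G}

theorem SimpleGraph.addCayley_adj_of_neg_mem (hs : ∀ x ∈ s, -x ∈ s) (hs0 : 0 ∉ s) (u v : G) :
    (addCayley s).Adj u v ↔ -u + v ∈ s := by
  rw [addCayley_adj]
  refine ⟨fun ⟨_, h⟩ => h.elim id fun h => by simpa using hs _ h, fun h => ⟨?_, Or.inl h⟩⟩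
  rintro rfl
  exact hs0 (by simpa using h)

theorem SimpleGraph.neighborSet_addCayley (hs : ∀ x ∈ s, -x ∈ s) (hs0 : 0 ∉ s) (v : G) :
    (addCayley s).neighborSet v = (v + ·) '' s := by
  ext w
  simp [addCayley_adj_of_neg_mem hs hs0]

theorem SimpleGraph.ncard_neighborSet_addCayley (hs : ∀ x ∈ s, -x ∈ s) (hs0 : 0 ∉ s) (v : G) :
    ((addCayley s).neighborSet v).ncard = s.ncard := by
  rw [neighborSet_addCayley hs hs0, Set.ncard_image_of_injective _ (add_right_injective v)]

end AddCayley

theorem Fin.exists_neg_eq_self_ne_zero {n : ℕ} [NeZero n] (hn : Even n) :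
    ∃ a : Fin n, -a = a ∧ a ≠ 0 := by
  obtain ⟨k, rfl⟩ := hn
  have hk : k ≠ 0 := by rintro rfl; exact NeZero.ne 0 rfl
  refine ⟨⟨k, by omega⟩, neg_eq_iff_add_eq_zero.2 ?_, ?_⟩
  · simp [Fin.ext_iff, Fin.val_add]
  · simpa [Fin.ext_iff] using hk

theorem addCayley_le_multiK {j s : ℕ} [NeZero j] {S : Set (Fin j × Fin s)}
    (hS : ∀ x ∈ S, x.1 ≠ 0) : addCayley S ≤ multiK j s := by
  rw [addCayley_le_iff]
  intro g hg a _
  simpa [multiK] using hS g hg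

theorem stmt7 (j s d : ℕ) (hj : 3 ≤ j) (hs : 1 ≤ s)
    (hje : Even j) (hdle : d ≤ (j - 1) * s - 1) :
    ∃ H : SimpleGraph (Fin j × Fin s), H ≤ multiK j s ∧ ∀ v, mdeg H v = d := by
  have : NeZero j := ⟨by omega⟩
  have : NeZero s := ⟨by omega⟩
  set A : Finset (Fin j × Fin s) := (univ.erase 0) ×ˢ univ
  have hA : ∀ x, x ∈ A ↔ x.1 ≠ 0 := by simp [A]
  have hAneg : ∀ x ∈ A, -x ∈ A := by simp [hA]
  have hAcard : #A = (j - 1) * s := by simp [A]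
  obtain ⟨a, haa, ha0⟩ := Fin.exists_neg_eq_self_ne_zero hje
  obtain ⟨S, hSA, hSneg, hScard⟩ := exists_neg_closed_subset_card_eq hAneg
    (e := (a, 0)) ((hA _).2 ha0) (by simp [haa]) (hAcard ▸ hdle.trans (Nat.sub_le _ _))
  have hS : ∀ x ∈ (S : Set (Fin j × Fin s)), x.1 ≠ 0 := fun x hx => (hA x).1 (hSA hx)
  refine ⟨addCayley S, addCayley_le_multiK hS, fun v => ?_⟩
  rw [mdeg, ncard_neighborSet_addCayley (by simpa using hSneg) (fun h => hS 0 h rfl),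
    Set.ncard_coe_finset, hScard]
end
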